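/- Let h be a smooth hermitian metric on a holomorphic vector bundle E over a complex manifold X of dimension n, with local coordinates (z₁,…,z_n). For an n-tuple u = (u₁,…,u_n) of holomorphic sections set T_u^h = Σ_{j,k} (u_j,u_k)_h · (dz_j ∧ dz̄_k)^, where (dz_j ∧ dz̄_k)^ is the wedge of all dz_i, dz̄_i except dz_j, dz̄_k with unimodular constant chosen so T_u^h is positive. Then i∂∂̄T_u^h = −Σ_{j,k}(Θ_{jk}^h u_j, u_k)_h dV + ‖Σ_j D′_{z_j} u_j‖²_h dV, and h is negatively curved in the sense of Nakano if and only if T_u^h is a plurisubharmonic (n−1,n−1)-form (i.e. i∂∂̄T_u^h ≥ 0) for every n-tuple u of holomorphic sections. -/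

import Mathlib

open MeasureTheory Complex Metric
open scoped ComplexOrder

noncomputable section

/-- The Wirtinger derivative `∂f/∂z_j` of a function on `ℂⁿ`. -/
def wD {n : ℕ} (j : Fin n) (f : (Fin n → ℂ) → ℂ) (z : Fin n → ℂ) : ℂ :=
  (1/2) * (fderiv ℝ f z (Pi.single j 1) - Complex.I * fderiv ℝ f z (Pi.single j Complex.I))

/-- The Wirtinger derivative `∂f/∂z̄_j` of a function on `ℂⁿ`. -/
def wDbar {n : ℕ} (j : Fin n) (f : (Fin n → ℂ) → ℂ) (z : Fin n → ℂ) : ℂ :=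
  (1/2) * (fderiv ℝ f z (Pi.single j 1) + Complex.I * fderiv ℝ f z (Pi.single j Complex.I))

/-- Entrywise Wirtinger derivative `∂h/∂z_j` of a matrix-valued function. -/
def mwD {n r : ℕ} (j : Fin n) (h : (Fin n → ℂ) → Matrix (Fin r) (Fin r) ℂ) (z : Fin n → ℂ) :
    Matrix (Fin r) (Fin r) ℂ :=
  Matrix.of fun a b => wD j (fun w => h w a b) z

/-- Entrywise Wirtinger derivative `∂h/∂z̄_j` of a matrix-valued function. -/
def mwDbar {n r : ℕ} (j : Fin n) (h : (Fin n → ℂ) → Matrix (Fin r) (Fin r) ℂ) (z : Fin n → ℂ) :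
    Matrix (Fin r) (Fin r) ℂ :=
  Matrix.of fun a b => wDbar j (fun w => h w a b) z

/-- The Chern connection coefficient `θ_j = h⁻¹ ∂_j h` in a holomorphic frame. -/
def conn {n r : ℕ} (h : (Fin n → ℂ) → Matrix (Fin r) (Fin r) ℂ) (j : Fin n) (z : Fin n → ℂ) :
    Matrix (Fin r) (Fin r) ℂ :=
  (h z)⁻¹ * mwD j h z

/-- The Chern curvature coefficient `Θ_{jk}`, where `Θ^h = ∂̄(h⁻¹∂h) = ∑ Θ_{jk} dz_j ∧ dz̄_k`. -/
def curv {n r : ℕ} (h : (Fin n → ℂ) → Matrix (Fin r) (Fin r) ℂ) (j k : Fin n) (z : Fin n → ℂ) :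
    Matrix (Fin r) (Fin r) ℂ :=
  - mwDbar k (conn h j) z

/-- `iΘ(ξ,ξ)` for a (possibly variable) vector field `ξ`, as a matrix. -/
def curvQ {n r : ℕ} (h : (Fin n → ℂ) → Matrix (Fin r) (Fin r) ℂ)
    (ξ : (Fin n → ℂ) → Fin n → ℂ) (z : Fin n → ℂ) : Matrix (Fin r) (Fin r) ℂ :=
  ∑ j, ∑ k, (ξ z j * (starRingEnd ℂ) (ξ z k)) • curv h j k z

/-- The hermitian pairing `(u,v)_h = v^* h u`. -/
def hpair {r : ℕ} (h : Matrix (Fin r) (Fin r) ℂ) (u v : Fin r → ℂ) : ℂ :=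
  dotProduct (star v) (h.mulVec u)

/-- The squared norm `‖u‖²_h`. -/
def hnorm {r : ℕ} (h : Matrix (Fin r) (Fin r) ℂ) (u : Fin r → ℂ) : ℝ :=
  (hpair h u u).re

/-- Plurisubharmonicity on a set: upper semicontinuity together with the sub-mean value
inequality on complex circles (whose closed disc lies in the set). -/
def PshOn {n : ℕ} (f : (Fin n → ℂ) → ℝ) (Ω : Set (Fin n → ℂ)) : Prop :=
  UpperSemicontinuousOn f Ω ∧
  ∀ z ∈ Ω, ∀ v : Fin n → ℂ, ∀ ρ : ℝ, 0 < ρ →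
    (∀ w : ℂ, ‖w‖ ≤ ρ → z + w • v ∈ Ω) →
    f z ≤ (1 / (2 * Real.pi)) * ∫ t in (0:ℝ)..(2 * Real.pi),
      f (z + ((ρ : ℂ) * Complex.exp (t * Complex.I)) • v)

/-- A singular hermitian metric: a measurable map into nonnegative hermitian forms. -/
structure IsSingularMetric {n r : ℕ} (h : (Fin n → ℂ) → Matrix (Fin r) (Fin r) ℂ)
    (Ω : Set (Fin n → ℂ)) : Prop where
  meas : ∀ a b, Measurable fun z => h z a b
  psd : ∀ z ∈ Ω, (h z).PosSemidef

/-- A (singular) metric is negatively curved in the sense of Griffiths if `‖u‖²_h` is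
plurisubharmonic for every local holomorphic section `u`. -/
def GriffithsNegSing {n r : ℕ} (h : (Fin n → ℂ) → Matrix (Fin r) (Fin r) ℂ)
    (Ω : Set (Fin n → ℂ)) : Prop :=
  ∀ U : Set (Fin n → ℂ), IsOpen U → U ⊆ Ω →
    ∀ u : (Fin n → ℂ) → Fin r → ℂ, DifferentiableOn ℂ u U →
      PshOn (fun z => hnorm (h z) (u z)) U

/-- A smooth hermitian metric which is negatively curved in the sense of Griffiths:
`(iΘ(ξ,ξ)s,s)_h ≤ 0` for all sections `s` and vector fields `ξ`. -/
structure SmoothGriffithsNeg {n r : ℕ} (h : (Fin n → ℂ) → Matrix (Fin r) (Fin r) ℂ)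
    (Ω : Set (Fin n → ℂ)) : Prop where
  smooth : ∀ a b, ContDiffOn ℝ (⊤ : ℕ∞) (fun z => h z a b) Ω
  posdef : ∀ z ∈ Ω, (h z).PosDef
  neg : ∀ z ∈ Ω, ∀ ξ : Fin n → ℂ, ∀ s : Fin r → ℂ,
    (hpair (h z) (((∑ j, ∑ k, (ξ j * (starRingEnd ℂ) (ξ k)) • curv h j k z)).mulVec s) s).re ≤ 0

/-- `hs` is a sequence of metrics decreasing pointwise to `h` on `Ω`. -/
def DecreasingTo {n r : ℕ} (hs : ℕ → (Fin n → ℂ) → Matrix (Fin r) (Fin r) ℂ)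
    (h : (Fin n → ℂ) → Matrix (Fin r) (Fin r) ℂ) (Ω : Set (Fin n → ℂ)) : Prop :=
  ∀ z ∈ Ω, (∀ ν : ℕ, ((hs ν z) - (hs (ν+1) z)).PosSemidef) ∧
    ∀ a b, Filter.Tendsto (fun ν => hs ν z a b) Filter.atTop (nhds (h z a b))

/-- Smooth test functions compactly supported in `Ω`. -/
structure IsTestFun {n : ℕ} (φ : (Fin n → ℂ) → ℂ) (Ω : Set (Fin n → ℂ)) : Prop where
  smooth : ContDiff ℝ (⊤ : ℕ∞) φ
  cpt : HasCompactSupport φ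
  sub : tsupport φ ⊆ Ω

/-- `g j` is the distributional Wirtinger derivative `∂h/∂z_j` on `Ω` (entrywise). -/
def IsDistribDz {n r : ℕ} (h : (Fin n → ℂ) → Matrix (Fin r) (Fin r) ℂ)
    (g : Fin n → (Fin n → ℂ) → Matrix (Fin r) (Fin r) ℂ) (Ω : Set (Fin n → ℂ)) : Prop :=
  ∀ j a b, ∀ φ : (Fin n → ℂ) → ℂ, IsTestFun φ Ω →
    ∫ z in Ω, h z a b * wD j φ z = - ∫ z in Ω, g j z a b * φ z

/-- Local square integrability on `Ω`. -/
def L2locOn {n : ℕ} (f : (Fin n → ℂ) → ℂ) (Ω : Set (Fin n → ℂ)) : Prop :=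
  ∀ K : Set (Fin n → ℂ), IsCompact K → K ⊆ Ω → IntegrableOn (fun z => ‖f z‖^2) K

end

/-!
Expanding `∂_j ∂̄_k (u_j, u_k)_h` by the Leibniz rule for the hermitian pairing, holomorphy of the
`u_j` kills every `∂̄ u` term, and the identities `h θ_j = ∂_j h`, `θ_kᴴ h = ∂̄_k h` and
`h Θ_{jk} = ∂̄_k h · θ_j - ∂̄_k ∂_j h` regroup what is left into
`-(Θ_{jk} u_j, u_k)_h + (D′_j u_j, D′_k u_k)_h`; summing over `j, k` gives the identity.
Nakano negativity then makes `i∂∂̄T_u^h` nonnegative because the second term is a norm.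
Conversely, given values `s_j` at `z`, the affine sections `u_j(w) = s_j - (w_j - z_j) θ_j(z) s_j`
satisfy `D′_j u_j(z) = 0`, so that only the curvature term survives.

The one analytic input beyond calculus is that the Wirtinger derivatives of a holomorphic function
on `ℂⁿ` are again holomorphic: the derivative along a complex line is a Cauchy integral, which can
be differentiated under the integral sign, Cauchy's estimate providing the dominating bound.
-/

open Filter Topology ComplexConjugate
open scoped Matrix Real

section Wirtinger

variable {n : ℕ} {j k : Fin n} {f g : (Fin n → ℂ) → ℂ} {z : Fin n → ℂ}

lemma wD_congr (h : f =ᶠ[𝓝 z] g) : wD j f z = wD j g z := by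
  simp only [wD, h.fderiv_eq]

lemma wDbar_congr (h : f =ᶠ[𝓝 z] g) : wDbar j f z = wDbar j g z := by
  simp only [wDbar, h.fderiv_eq]

lemma wD_add (hf : DifferentiableAt ℝ f z) (hg : DifferentiableAt ℝ g z) :
    wD j (fun w => f w + g w) z = wD j f z + wD j g z := by
  simp only [wD, fderiv_fun_add hf hg, add_apply]; ring

lemma wD_mul (hf : DifferentiableAt ℝ f z) (hg : DifferentiableAt ℝ g z) :
    wD j (fun w => f w * g w) z = wD j f z * g z + f z * wD j g z := by
  simp only [wD, fderiv_fun_mul hf hg, add_apply, smul_apply, smul_eq_mul]; ring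

lemma wDbar_mul (hf : DifferentiableAt ℝ f z) (hg : DifferentiableAt ℝ g z) :
    wDbar j (fun w => f w * g w) z = wDbar j f z * g z + f z * wDbar j g z := by
  simp only [wDbar, fderiv_fun_mul hf hg, add_apply, smul_apply, smul_eq_mul]; ring

lemma wD_sum {ι : Type*} (s : Finset ι) {F : ι → (Fin n → ℂ) → ℂ}
    (hF : ∀ i ∈ s, DifferentiableAt ℝ (F i) z) :
    wD j (fun w => ∑ i ∈ s, F i w) z = ∑ i ∈ s, wD j (F i) z := by
  simp only [wD, fderiv_fun_sum hF, sum_apply, Finset.mul_sum, ← Finset.sum_sub_distrib]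

lemma wDbar_sum {ι : Type*} (s : Finset ι) {F : ι → (Fin n → ℂ) → ℂ}
    (hF : ∀ i ∈ s, DifferentiableAt ℝ (F i) z) :
    wDbar j (fun w => ∑ i ∈ s, F i w) z = ∑ i ∈ s, wDbar j (F i) z := by
  simp only [wDbar, fderiv_fun_sum hF, sum_apply, Finset.mul_sum, ← Finset.sum_add_distrib]

lemma wD_conj : wD j (fun w => conj (f w)) z = conj (wDbar j f z) := by
  change wD j (fun w => star (f w)) z = _
  simp only [wD, wDbar, fderiv_star]
  simp only [ContinuousLinearMap.comp_apply, ContinuousLinearEquiv.coe_coe, starL'_apply,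
    RCLike.star_def, map_mul, map_add, conj_I, map_div₀, map_one, map_ofNat]
  ring

lemma wDbar_conj : wDbar j (fun w => conj (f w)) z = conj (wD j f z) := by
  change wDbar j (fun w => star (f w)) z = _
  simp only [wD, wDbar, fderiv_star]
  simp only [ContinuousLinearMap.comp_apply, ContinuousLinearEquiv.coe_coe, starL'_apply,
    RCLike.star_def, map_mul, map_sub, conj_I, map_div₀, map_one, map_ofNat]
  ring

lemma DifferentiableAt.wDbar_eq_zero (hf : DifferentiableAt ℂ f z) : wDbar j f z = 0 := by
  have hI : (Pi.single j I : Fin n → ℂ) = I • Pi.single j 1 := by simp [← Pi.single_smul]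
  simp only [wDbar, hf.fderiv_restrictScalars ℝ, ContinuousLinearMap.coe_restrictScalars', hI,
    map_smul, smul_eq_mul]
  linear_combination (fderiv ℂ f z (Pi.single j 1) / 2) * I_sq

lemma DifferentiableAt.wD_eq (hf : DifferentiableAt ℂ f z) :
    wD j f z = fderiv ℂ f z (Pi.single j 1) := by
  have hI : (Pi.single j I : Fin n → ℂ) = I • Pi.single j 1 := by simp [← Pi.single_smul]
  simp only [wD, hf.fderiv_restrictScalars ℝ, ContinuousLinearMap.coe_restrictScalars', hI,
    map_smul, smul_eq_mul]
  linear_combination (-fderiv ℂ f z (Pi.single j 1) / 2) * I_sq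

lemma hasFDerivAt_fderiv_apply (hf : DifferentiableAt ℝ (fderiv ℝ f) z) (v : Fin n → ℂ) :
    HasFDerivAt (fun w => fderiv ℝ f w v) ((fderiv ℝ (fderiv ℝ f) z).flip v) z := by
  simpa using hf.hasFDerivAt.clm_apply (hasFDerivAt_const v z)

lemma hasFDerivAt_wD (hf : DifferentiableAt ℝ (fderiv ℝ f) z) :
    HasFDerivAt (wD j f) ((1/2 : ℂ) • ((fderiv ℝ (fderiv ℝ f) z).flip (Pi.single j 1)
      - I • (fderiv ℝ (fderiv ℝ f) z).flip (Pi.single j I))) z :=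
  ((hasFDerivAt_fderiv_apply hf (Pi.single j 1)).fun_sub
    ((hasFDerivAt_fderiv_apply hf (Pi.single j I)).fun_const_smul I)).fun_const_smul (1/2 : ℂ)

lemma hasFDerivAt_wDbar (hf : DifferentiableAt ℝ (fderiv ℝ f) z) :
    HasFDerivAt (wDbar j f) ((1/2 : ℂ) • ((fderiv ℝ (fderiv ℝ f) z).flip (Pi.single j 1)
      + I • (fderiv ℝ (fderiv ℝ f) z).flip (Pi.single j I))) z :=
  ((hasFDerivAt_fderiv_apply hf (Pi.single j 1)).fun_add
    ((hasFDerivAt_fderiv_apply hf (Pi.single j I)).fun_const_smul I)).fun_const_smul (1/2 : ℂ)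

lemma ContDiffAt.differentiableAt_fderiv (hf : ContDiffAt ℝ 2 f z) :
    DifferentiableAt ℝ (fderiv ℝ f) z :=
  (hf.fderiv_right (m := 1) (by norm_num)).differentiableAt one_ne_zero

lemma ContDiffAt.differentiableAt_wD (hf : ContDiffAt ℝ 2 f z) : DifferentiableAt ℝ (wD j f) z :=
  (hasFDerivAt_wD hf.differentiableAt_fderiv).differentiableAt

lemma ContDiffAt.differentiableAt_wDbar (hf : ContDiffAt ℝ 2 f z) :
    DifferentiableAt ℝ (wDbar j f) z :=
  (hasFDerivAt_wDbar hf.differentiableAt_fderiv).differentiableAt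

lemma ContDiffAt.wD_wDbar_comm (hf : ContDiffAt ℝ 2 f z) :
    wD j (wDbar k f) z = wDbar k (wD j f) z := by
  have hsymm := hf.isSymmSndFDerivAt (by simp [minSmoothness_of_isRCLikeNormedField])
  rw [wD, wDbar, (hasFDerivAt_wDbar hf.differentiableAt_fderiv).fderiv,
    (hasFDerivAt_wD hf.differentiableAt_fderiv).fderiv]
  simp only [smul_apply, add_apply, sub_apply, ContinuousLinearMap.flip_apply, smul_eq_mul,
    hsymm (Pi.single j _) (Pi.single k _)]
  ring

end Wirtinger

section HermitianPairing

variable {r : ℕ} (H M : Matrix (Fin r) (Fin r) ℂ) (u u' v v' : Fin r → ℂ)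

lemma hpair_eq_sum : hpair H u v = ∑ b, ∑ a, conj (v b) * (H b a * u a) := by
  simp only [hpair, dotProduct, Matrix.mulVec, Pi.star_apply, Finset.mul_sum]
  rfl

lemma hpair_add_left : hpair H (u + u') v = hpair H u v + hpair H u' v := by
  simp [hpair, Matrix.mulVec_add, dotProduct_add]

lemma hpair_add_right : hpair H u (v + v') = hpair H u v + hpair H u v' := by
  simp [hpair, star_add, add_dotProduct]

lemma hpair_zero_left : hpair H 0 v = 0 := by simp [hpair]

lemma hpair_zero_right : hpair H u 0 = 0 := by simp [hpair]

lemma hpair_sub_mat : hpair (H - M) u v = hpair H u v - hpair M u v := by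
  simp [hpair, Matrix.sub_mulVec]

lemma hpair_mulVec_left : hpair H (M *ᵥ u) v = hpair (H * M) u v := by
  simp [hpair, Matrix.mulVec_mulVec]

lemma hpair_mulVec_right : hpair H u (M *ᵥ v) = hpair (Mᴴ * H) u v := by
  simp only [hpair, Matrix.star_mulVec, Matrix.dotProduct_mulVec, Matrix.vecMul_vecMul]

lemma hpair_sum_left {ι : Type*} (s : Finset ι) (F : ι → Fin r → ℂ) :
    hpair H (∑ i ∈ s, F i) v = ∑ i ∈ s, hpair H (F i) v := by
  simp [hpair, Matrix.mulVec_sum, dotProduct_sum]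

lemma hpair_sum_right {ι : Type*} (s : Finset ι) (F : ι → Fin r → ℂ) :
    hpair H u (∑ i ∈ s, F i) = ∑ i ∈ s, hpair H u (F i) := by
  simp [hpair, star_sum, sum_dotProduct]

lemma conj_hpair : conj (hpair H u v) = hpair Hᴴ v u := by
  simp only [hpair_eq_sum, map_sum, map_mul, Complex.conj_conj, Matrix.conjTranspose_apply,
    Complex.star_def]
  rw [Finset.sum_comm]
  exact Finset.sum_congr rfl fun _ _ => Finset.sum_congr rfl fun _ _ => by ring

lemma ofReal_hnorm {H : Matrix (Fin r) (Fin r) ℂ} (hH : H.IsHermitian) :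
    (hnorm H u : ℂ) = hpair H u u := by
  have hreal : conj (hpair H u u) = hpair H u u := by rw [conj_hpair, hH.eq]
  exact Complex.conj_eq_iff_re.mp hreal

lemma Matrix.PosSemidef.hnorm_nonneg {H : Matrix (Fin r) (Fin r) ℂ} (hH : H.PosSemidef) :
    0 ≤ hnorm H u :=
  (Complex.le_def.mp (hH.dotProduct_mulVec_nonneg u)).1

end HermitianPairing

noncomputable section Sections

variable {n r : ℕ}

def vecWD (j : Fin n) (u : (Fin n → ℂ) → Fin r → ℂ) (z : Fin n → ℂ) : Fin r → ℂ :=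
  fun a => wD j (fun w => u w a) z

def vecWDbar (j : Fin n) (u : (Fin n → ℂ) → Fin r → ℂ) (z : Fin n → ℂ) : Fin r → ℂ :=
  fun a => wDbar j (fun w => u w a) z

/-- The `(1,0)`-part `D′_{z_j} u = ∂u/∂z_j + θ_j u` of the Chern connection. -/
def covD (h : (Fin n → ℂ) → Matrix (Fin r) (Fin r) ℂ) (j : Fin n)
    (u : (Fin n → ℂ) → Fin r → ℂ) (z : Fin n → ℂ) : Fin r → ℂ :=
  vecWD j u z + conn h j z *ᵥ u z

variable {j : Fin n} {z : Fin n → ℂ} {h : (Fin n → ℂ) → Matrix (Fin r) (Fin r) ℂ}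
  {u v : (Fin n → ℂ) → Fin r → ℂ}

lemma differentiableAt_hpair (hh : ∀ a b, DifferentiableAt ℝ (fun w => h w a b) z)
    (hu : ∀ a, DifferentiableAt ℝ (fun w => u w a) z)
    (hv : ∀ a, DifferentiableAt ℝ (fun w => v w a) z) :
    DifferentiableAt ℝ (fun w => hpair (h w) (u w) (v w)) z := by
  simp only [hpair_eq_sum]
  fun_prop

lemma wD_hpair (hh : ∀ a b, DifferentiableAt ℝ (fun w => h w a b) z)
    (hu : ∀ a, DifferentiableAt ℝ (fun w => u w a) z)
    (hv : ∀ a, DifferentiableAt ℝ (fun w => v w a) z) :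
    wD j (fun w => hpair (h w) (u w) (v w)) z = hpair (mwD j h z) (u z) (v z)
      + hpair (h z) (vecWD j u z) (v z) + hpair (h z) (u z) (vecWDbar j v z) := by
  simp only [hpair_eq_sum, ← Finset.sum_add_distrib]
  rw [wD_sum _ fun b _ => by fun_prop]
  refine Finset.sum_congr rfl fun b _ => ?_
  rw [wD_sum _ fun a _ => by fun_prop]
  refine Finset.sum_congr rfl fun a _ => ?_
  rw [wD_mul (by fun_prop) (by fun_prop), wD_mul (hh b a) (hu a), wD_conj]
  simp only [mwD, vecWD, vecWDbar, Matrix.of_apply]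
  ring

lemma wDbar_hpair (hh : ∀ a b, DifferentiableAt ℝ (fun w => h w a b) z)
    (hu : ∀ a, DifferentiableAt ℝ (fun w => u w a) z)
    (hv : ∀ a, DifferentiableAt ℝ (fun w => v w a) z) :
    wDbar j (fun w => hpair (h w) (u w) (v w)) z = hpair (mwDbar j h z) (u z) (v z)
      + hpair (h z) (vecWDbar j u z) (v z) + hpair (h z) (u z) (vecWD j v z) := by
  simp only [hpair_eq_sum, ← Finset.sum_add_distrib]
  rw [wDbar_sum _ fun b _ => by fun_prop]
  refine Finset.sum_congr rfl fun b _ => ?_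
  rw [wDbar_sum _ fun a _ => by fun_prop]
  refine Finset.sum_congr rfl fun a _ => ?_
  rw [wDbar_mul (by fun_prop) (by fun_prop), wDbar_mul (hh b a) (hu a), wDbar_conj]
  simp only [mwDbar, vecWD, vecWDbar, Matrix.of_apply]
  ring

end Sections

section HolomorphicDerivative

variable {E : Type*} [NormedAddCommGroup E] [NormedSpace ℂ E] {f : E → ℂ} {Ω : Set E}
  {x v : E} {ρ : ℝ}

lemma fderiv_apply_eq_cderiv (hΩ : IsOpen Ω) (hf : DifferentiableOn ℂ f Ω) (hρ : 0 < ρ)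
    (hx : closedBall (0 : ℂ) ρ ⊆ (fun t : ℂ => x + t • v) ⁻¹' Ω) :
    fderiv ℂ f x v = cderiv ρ (fun t : ℂ => f (x + t • v)) 0 := by
  have hline : ∀ t : ℂ, HasDerivAt (fun t : ℂ => x + t • v) v t := fun t => by
    simpa using ((hasDerivAt_id t).smul_const v).const_add x
  have hg : DifferentiableOn ℂ (fun t : ℂ => f (x + t • v)) ((fun t : ℂ => x + t • v) ⁻¹' Ω) :=
    fun t ht => ((hf.differentiableAt (hΩ.mem_nhds ht)).comp t
      (hline t).differentiableAt).differentiableWithinAt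
  have hx0 : x ∈ Ω := by simpa using hx (mem_closedBall_self hρ.le)
  have hderiv : HasDerivAt (fun t : ℂ => f (x + t • v)) (fderiv ℂ f x v) 0 := by
    have hf0 : HasFDerivAt f (fderiv ℂ f x) (x + (0 : ℂ) • v) := by
      simpa using (hf.differentiableAt (hΩ.mem_nhds hx0)).hasFDerivAt
    exact hf0.comp_hasDerivAt 0 (hline 0)
  rw [cderiv_eq_deriv (hΩ.preimage (by fun_prop)) hg hρ hx, hderiv.deriv]

/-- Cauchy's estimate, applied on each complex line through `x`. -/
lemma norm_fderiv_le_of_forall_mem_closedBall (hΩ : IsOpen Ω) (hf : DifferentiableOn ℂ f Ω)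
    {M : ℝ} (hρ : 0 < ρ) (hball : closedBall x ρ ⊆ Ω) (hM : ∀ y ∈ closedBall x ρ, ‖f y‖ ≤ M) :
    ‖fderiv ℂ f x‖ ≤ M / ρ := by
  have hM0 : 0 ≤ M := (norm_nonneg _).trans (hM x (mem_closedBall_self hρ.le))
  refine ContinuousLinearMap.opNorm_le_of_unit_norm (by positivity) fun v hv => ?_
  have hline : ∀ t : ℂ, ‖t‖ ≤ ρ → x + t • v ∈ closedBall x ρ := fun t ht => by
    simpa [dist_eq_norm, norm_smul, hv] using ht
  rw [fderiv_apply_eq_cderiv hΩ hf hρ fun t ht => hball (hline t (mem_closedBall_zero_iff.mp ht))]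
  exact norm_cderiv_le hρ fun t ht => hM _ (hline t (by simp_all))

lemma exists_closedBall_norm_fderiv_le [ProperSpace E] (hΩ : IsOpen Ω)
    (hf : DifferentiableOn ℂ f Ω) (hx : x ∈ Ω) :
    ∃ δ > 0, ∃ C, closedBall x δ ⊆ Ω ∧ ∀ y ∈ closedBall x δ, ‖fderiv ℂ f y‖ ≤ C := by
  obtain ⟨ε, hε, hεΩ⟩ := Metric.isOpen_iff.mp hΩ x hx
  have hΩ' : closedBall x (ε / 2) ⊆ Ω := (closedBall_subset_ball (by linarith)).trans hεΩ
  obtain ⟨M, hM⟩ := (isCompact_closedBall x (ε / 2)).exists_bound_of_continuousOn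
    (hf.continuousOn.mono hΩ')
  have hsub : ∀ y ∈ closedBall x (ε / 4), closedBall y (ε / 4) ⊆ closedBall x (ε / 2) :=
    fun y hy => closedBall_subset_closedBall' (by rw [mem_closedBall] at hy; linarith)
  refine ⟨ε / 4, by positivity, M / (ε / 4),
    (hsub x (mem_closedBall_self (by positivity))).trans hΩ', fun y hy => norm_fderiv_le_of_forall_mem_closedBall hΩ hf (by positivity)
      ((hsub y hy).trans hΩ') fun w hw => hM w (hsub y hy hw)⟩

lemma differentiableAt_cderiv_slice [FiniteDimensional ℂ E] {s : Set E} {C : ℝ} (hρ : 0 < ρ)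
    (hs : s ∈ 𝓝 x) (hf : ∀ y ∈ s, ∀ t ∈ sphere (0 : ℂ) ρ, DifferentiableAt ℂ f (y + t • v))
    (hC : ∀ y ∈ s, ∀ t ∈ sphere (0 : ℂ) ρ, ‖fderiv ℂ f (y + t • v)‖ ≤ C) :
    DifferentiableAt ℂ (fun y => cderiv ρ (fun t : ℂ => f (y + t • v)) 0) x := by
  borelize E
  set γ := circleMap 0 ρ
  have hγ : ∀ θ, γ θ ∈ sphere (0 : ℂ) ρ := fun θ => circleMap_mem_sphere 0 hρ.le θ
  have hγc : Continuous γ := continuous_circleMap 0 ρ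
  have hγ' : Continuous (deriv γ) := by
    rw [show deriv γ = fun θ => γ θ * I from funext (deriv_circleMap 0 ρ)]
    fun_prop
  have hκ : Continuous fun θ => ((γ θ - 0) ^ 2)⁻¹ :=
    (by fun_prop : Continuous fun θ => (γ θ - 0) ^ 2).inv₀
      fun θ => pow_ne_zero _ (sub_ne_zero.2 (circleMap_ne_center hρ.ne'))
  have hF : ∀ y ∈ s, Continuous fun θ => deriv γ θ • ((γ θ - 0) ^ 2)⁻¹ • f (y + γ θ • v) :=
    fun y hy => hγ'.smul <| hκ.smul <| continuous_iff_continuousAt.2 fun θ =>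
      ContinuousAt.comp (g := f) (hf y hy _ (hγ θ)).continuousAt (by fun_prop)
  have hκγ : ∀ θ, ‖deriv γ θ‖ * ‖((γ θ - 0) ^ 2)⁻¹‖ = ρ * (ρ ^ 2)⁻¹ := fun θ => by
    simp [γ, abs_of_pos hρ]
  -- `cderiv ρ g 0` unfolds to `(2πi)⁻¹ • ∫ θ in 0..2π, deriv γ θ • ((γ θ - 0) ^ 2)⁻¹ • g (γ θ)`.
  have key := intervalIntegral.hasFDerivAt_integral_of_dominated_of_fderiv_le
    (F := fun y θ => deriv γ θ • ((γ θ - 0) ^ 2)⁻¹ • f (y + γ θ • v))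
    (F' := fun y θ => deriv γ θ • ((γ θ - 0) ^ 2)⁻¹ • fderiv ℂ f (y + γ θ • v))
    (bound := fun _ => ρ * (ρ ^ 2)⁻¹ * C) (a := 0) (b := 2 * π) (μ := volume) hs
    (eventually_of_mem hs fun y hy => (hF y hy).aestronglyMeasurable)
    ((hF x (mem_of_mem_nhds hs)).intervalIntegrable _ _)
    (hγ'.aestronglyMeasurable.smul <| hκ.aestronglyMeasurable.smul <|
      ((measurable_fderiv ℂ f).comp (by fun_prop)).aestronglyMeasurable)
    (ae_of_all _ fun θ _ y hy => by
      rw [norm_smul, norm_smul, ← mul_assoc, hκγ]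
      gcongr
      exact hC y hy _ (hγ θ))
    intervalIntegrable_const
    (ae_of_all _ fun θ _ y hy => by
      have hfy : HasFDerivAt (fun y => f (y + γ θ • v)) (fderiv ℂ f (y + γ θ • v)) y :=
        (hf y hy _ (hγ θ)).hasFDerivAt.comp y ((hasFDerivAt_id y).add_const _)
      exact (hfy.fun_const_smul _).fun_const_smul _)
  exact key.differentiableAt.const_smul (2 * π * I : ℂ)⁻¹

theorem DifferentiableOn.fderiv_apply [FiniteDimensional ℂ E] (hΩ : IsOpen Ω)
    (hf : DifferentiableOn ℂ f Ω) (v : E) : DifferentiableOn ℂ (fun x => fderiv ℂ f x v) Ω := by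
  intro z hz
  obtain ⟨δ, hδ, C, hδΩ, hC⟩ := exists_closedBall_norm_fderiv_le hΩ hf hz
  set ρ := δ / 2 / (‖v‖ + 1)
  have hρ : 0 < ρ := by positivity
  have hline : ∀ y ∈ ball z (δ / 2), ∀ t : ℂ, ‖t‖ ≤ ρ → y + t • v ∈ closedBall z δ := by
    intro y hy t ht
    have htv : ‖t‖ * ‖v‖ ≤ δ / 2 :=
      calc ‖t‖ * ‖v‖ ≤ ρ * (‖v‖ + 1) := by gcongr; linarith
        _ = δ / 2 := div_mul_cancel₀ _ (by positivity)
    rw [mem_ball_iff_norm] at hy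
    rw [mem_closedBall_iff_norm]
    calc ‖y + t • v - z‖ = ‖t • v + (y - z)‖ := by congr 1; abel
      _ ≤ ‖t • v‖ + ‖y - z‖ := norm_add_le _ _
      _ ≤ δ := by rw [norm_smul]; linarith
  have hnear : ball z (δ / 2) ∈ 𝓝 z := ball_mem_nhds z (half_pos hδ)
  have hrep : (fun x => fderiv ℂ f x v) =ᶠ[𝓝 z]
      fun y => cderiv ρ (fun t : ℂ => f (y + t • v)) 0 :=
    eventually_of_mem hnear fun y hy => fderiv_apply_eq_cderiv hΩ hf hρ fun t ht =>
      hδΩ (hline y hy t (mem_closedBall_zero_iff.mp ht))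
  have hsphere : ∀ y ∈ ball z (δ / 2), ∀ t ∈ sphere (0 : ℂ) ρ, y + t • v ∈ closedBall z δ :=
    fun y hy t ht => hline y hy t (mem_sphere_zero_iff_norm.mp ht).le
  exact ((differentiableAt_cderiv_slice hρ hnear
    (fun y hy t ht => hf.differentiableAt (hΩ.mem_nhds (hδΩ (hsphere y hy t ht))))
    (fun y hy t ht => hC _ (hsphere y hy t ht))).congr_of_eventuallyEq hrep).differentiableWithinAt

end HolomorphicDerivative

section MatrixCalculus

section Determinant

variable {E ι : Type*} [NormedAddCommGroup E] [NormedSpace ℝ E] [Fintype ι] [DecidableEq ι]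
  {M : E → Matrix ι ι ℂ} {x : E}

lemma differentiableAt_det (hM : ∀ a b, DifferentiableAt ℝ (fun w => M w a b) x) :
    DifferentiableAt ℝ (fun w => (M w).det) x := by
  simp only [Matrix.det_apply]
  fun_prop

lemma differentiableAt_inv_apply (hM : ∀ a b, DifferentiableAt ℝ (fun w => M w a b) x)
    (hdet : IsUnit (M x).det) (a b : ι) : DifferentiableAt ℝ (fun w => (M w)⁻¹ a b) x := by
  simp only [Matrix.inv_def, Ring.inverse_eq_inv', Matrix.smul_apply, smul_eq_mul,
    Matrix.adjugate_apply]
  refine ((differentiableAt_det hM).inv hdet.ne_zero).mul (differentiableAt_det fun c d => ?_)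
  by_cases hc : c = b
  · simp [hc, Matrix.updateRow_apply]
  · simpa [Matrix.updateRow_apply, hc] using hM c d

end Determinant

variable {n r : ℕ} {j k : Fin n} {z : Fin n → ℂ} {A B : (Fin n → ℂ) → Matrix (Fin r) (Fin r) ℂ}

lemma mwDbar_congr (hAB : A =ᶠ[𝓝 z] B) : mwDbar k A z = mwDbar k B z := by
  ext a b
  exact wDbar_congr (hAB.mono fun w hw => show A w a b = B w a b by rw [hw])

lemma mwDbar_mul (hA : ∀ a b, DifferentiableAt ℝ (fun w => A w a b) z)
    (hB : ∀ a b, DifferentiableAt ℝ (fun w => B w a b) z) :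
    mwDbar k (fun w => A w * B w) z = mwDbar k A z * B z + A z * mwDbar k B z := by
  ext a b
  simp only [mwDbar, Matrix.of_apply, Matrix.mul_apply, Matrix.add_apply]
  rw [wDbar_sum (F := fun c w => A w a c * B w c b) _ fun c _ => (hA a c).fun_mul (hB c b),
    ← Finset.sum_add_distrib]
  exact Finset.sum_congr rfl fun c _ => wDbar_mul (hA a c) (hB c b)

lemma conjTranspose_mwD (hA : ∀ᶠ w in 𝓝 z, (A w).IsHermitian) :
    (mwD k A z)ᴴ = mwDbar k A z := by
  ext a b
  simp only [Matrix.conjTranspose_apply, mwD, mwDbar, Matrix.of_apply]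
  rw [Complex.star_def, ← wDbar_conj]
  exact wDbar_congr (hA.mono fun w hw => by simpa using congrFun₂ hw.eq a b)

end MatrixCalculus

section HolomorphicSections

variable {n r : ℕ} {Ω : Set (Fin n → ℂ)} {u : (Fin n → ℂ) → Fin r → ℂ} {j : Fin n}
  {z : Fin n → ℂ}

lemma DifferentiableOn.vecWDbar_eq_zero (hu : DifferentiableOn ℂ u Ω) (hΩ : IsOpen Ω)
    (hz : z ∈ Ω) : vecWDbar j u z = 0 :=
  funext fun a => ((differentiableOn_pi.1 hu a).differentiableAt (hΩ.mem_nhds hz)).wDbar_eq_zero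

lemma DifferentiableOn.vecWD (hu : DifferentiableOn ℂ u Ω) (hΩ : IsOpen Ω) :
    DifferentiableOn ℂ (vecWD j u) Ω := by
  refine differentiableOn_pi.2 fun a => ?_
  have hua := differentiableOn_pi.1 hu a
  exact (hua.fderiv_apply hΩ _).congr fun w hw =>
    (hua.differentiableAt (hΩ.mem_nhds hw)).wD_eq

end HolomorphicSections

section ChernConnection

variable {n r : ℕ} {h : (Fin n → ℂ) → Matrix (Fin r) (Fin r) ℂ} {j k : Fin n} {z : Fin n → ℂ}

lemma mul_conn (hdet : IsUnit (h z).det) : h z * conn h j z = mwD j h z :=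
  Matrix.mul_nonsing_inv_cancel_left _ _ hdet

lemma conjTranspose_conn_mul (hherm : ∀ᶠ w in 𝓝 z, (h w).IsHermitian)
    (hdet : IsUnit (h z).det) : (conn h k z)ᴴ * h z = mwDbar k h z := by
  rw [conn, Matrix.conjTranspose_mul, Matrix.conjTranspose_nonsing_inv, hherm.self_of_nhds.eq,
    Matrix.mul_assoc, Matrix.nonsing_inv_mul _ hdet, Matrix.mul_one, conjTranspose_mwD hherm]

lemma differentiableAt_conn_apply (hh : ∀ a b, ContDiffAt ℝ 2 (fun w => h w a b) z)
    (hdet : IsUnit (h z).det) (a b : Fin r) : DifferentiableAt ℝ (fun w => conn h j w a b) z := by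
  have hinv := differentiableAt_inv_apply (fun a b => (hh a b).differentiableAt two_ne_zero) hdet
  simp only [conn, Matrix.mul_apply, mwD, Matrix.of_apply]
  exact DifferentiableAt.fun_sum fun c _ => (hinv a c).mul (hh c b).differentiableAt_wD

lemma mul_curv (hh : ∀ a b, ContDiffAt ℝ 2 (fun w => h w a b) z)
    (hdet : ∀ᶠ w in 𝓝 z, IsUnit (h w).det) :
    h z * curv h j k z = mwDbar k h z * conn h j z - mwDbar k (mwD j h) z := by
  have hprod : mwDbar k (mwD j h) z
      = mwDbar k h z * conn h j z + h z * mwDbar k (conn h j) z := by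
    rw [mwDbar_congr (hdet.mono fun w hw => (mul_conn hw).symm)]
    exact mwDbar_mul (fun a b => (hh a b).differentiableAt two_ne_zero)
      (differentiableAt_conn_apply hh hdet.self_of_nhds)
  rw [curv, hprod, Matrix.mul_neg]
  abel

end ChernConnection

section CurvatureIdentity

variable {n r : ℕ} {Ω : Set (Fin n → ℂ)} {h : (Fin n → ℂ) → Matrix (Fin r) (Fin r) ℂ}
  {u v : (Fin n → ℂ) → Fin r → ℂ} {j k : Fin n} {z : Fin n → ℂ}

lemma wD_wDbar_hpair (hΩ : IsOpen Ω) (hz : z ∈ Ω)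
    (hh : ∀ a b, ContDiffOn ℝ 2 (fun w => h w a b) Ω)
    (hu : DifferentiableOn ℂ u Ω) (hv : DifferentiableOn ℂ v Ω) :
    wD j (fun w => wDbar k (fun w' => hpair (h w') (u w') (v w')) w) z
      = hpair (mwD j (mwDbar k h) z) (u z) (v z) + hpair (mwDbar k h z) (vecWD j u z) (v z)
        + hpair (mwD j h z) (u z) (vecWD k v z) + hpair (h z) (vecWD j u z) (vecWD k v z) := by
  have hhR : ∀ w ∈ Ω, ∀ a b, DifferentiableAt ℝ (fun w => h w a b) w := fun w hw a b =>
    ((hh a b).contDiffAt (hΩ.mem_nhds hw)).differentiableAt two_ne_zero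
  have hR : ∀ {u : (Fin n → ℂ) → Fin r → ℂ}, DifferentiableOn ℂ u Ω →
      ∀ w ∈ Ω, ∀ a, DifferentiableAt ℝ (fun w => u w a) w := fun hu w hw a =>
    ((differentiableOn_pi.1 hu a).differentiableAt (hΩ.mem_nhds hw)).restrictScalars ℝ
  have hvk : DifferentiableOn ℂ (vecWD k v) Ω := hv.vecWD hΩ
  have hhk : ∀ a b, DifferentiableAt ℝ (fun w => mwDbar k h w a b) z := fun a b =>
    ((hh a b).contDiffAt (hΩ.mem_nhds hz)).differentiableAt_wDbar
  have hinner : (fun w => wDbar k (fun w' => hpair (h w') (u w') (v w')) w) =ᶠ[𝓝 z]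
      fun w => hpair (mwDbar k h w) (u w) (v w) + hpair (h w) (u w) (vecWD k v w) := by
    filter_upwards [hΩ.mem_nhds hz] with w hw
    rw [wDbar_hpair (hhR w hw) (hR hu w hw) (hR hv w hw), hu.vecWDbar_eq_zero hΩ hw,
      hpair_zero_left, add_zero]
  rw [wD_congr hinner,
    wD_add (differentiableAt_hpair hhk (hR hu z hz) (hR hv z hz))
      (differentiableAt_hpair (hhR z hz) (hR hu z hz) (hR hvk z hz)),
    wD_hpair hhk (hR hu z hz) (hR hv z hz), wD_hpair (hhR z hz) (hR hu z hz) (hR hvk z hz),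
    hv.vecWDbar_eq_zero hΩ hz, hvk.vecWDbar_eq_zero hΩ hz, hpair_zero_right, hpair_zero_right]
  ring

lemma wD_wDbar_hpair_eq (hΩ : IsOpen Ω) (hz : z ∈ Ω)
    (hh : ∀ a b, ContDiffOn ℝ 2 (fun w => h w a b) Ω) (hherm : ∀ w ∈ Ω, (h w).IsHermitian)
    (hdet : ∀ w ∈ Ω, IsUnit (h w).det) (hu : DifferentiableOn ℂ u Ω)
    (hv : DifferentiableOn ℂ v Ω) :
    wD j (fun w => wDbar k (fun w' => hpair (h w') (u w') (v w')) w) z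
      = -hpair (h z) (curv h j k z *ᵥ u z) (v z)
        + hpair (h z) (covD h j u z) (covD h k v z) := by
  have hhz : ∀ a b, ContDiffAt ℝ 2 (fun w => h w a b) z := fun a b =>
    (hh a b).contDiffAt (hΩ.mem_nhds hz)
  have hcomm : mwD j (mwDbar k h) z = mwDbar k (mwD j h) z := by
    ext a b
    exact (hhz a b).wD_wDbar_comm
  have hconn := conjTranspose_conn_mul (k := k) (eventually_of_mem (hΩ.mem_nhds hz) hherm)
    (hdet z hz)
  rw [wD_wDbar_hpair hΩ hz hh hu hv, covD, covD, hpair_add_left, hpair_add_right,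
    hpair_add_right]
  rw [hpair_mulVec_left, hpair_mulVec_right, hpair_mulVec_right, hpair_mulVec_left, hconn,
    mul_conn (hdet z hz), hpair_mulVec_left,
    mul_curv hhz (eventually_of_mem (hΩ.mem_nhds hz) hdet), hpair_sub_mat, hcomm]
  ring

end CurvatureIdentity

noncomputable section Nakano

variable {n r : ℕ}

/-- The coefficient of `dV` in `i∂∂̄T_u^h`. -/
def ddbarT (h : (Fin n → ℂ) → Matrix (Fin r) (Fin r) ℂ) (u : Fin n → (Fin n → ℂ) → Fin r → ℂ)
    (z : Fin n → ℂ) : ℂ :=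
  ∑ j, ∑ k, wD j (fun w => wDbar k (fun v => hpair (h v) (u j v) (u k v)) w) z

def nakanoForm (h : (Fin n → ℂ) → Matrix (Fin r) (Fin r) ℂ) (z : Fin n → ℂ)
    (s : Fin n → Fin r → ℂ) : ℂ :=
  ∑ j, ∑ k, hpair (h z) (curv h j k z *ᵥ s j) (s k)

variable {Ω : Set (Fin n → ℂ)} {h : (Fin n → ℂ) → Matrix (Fin r) (Fin r) ℂ}
  {u : Fin n → (Fin n → ℂ) → Fin r → ℂ} {z : Fin n → ℂ}

theorem ddbarT_eq (hΩ : IsOpen Ω) (hz : z ∈ Ω)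
    (hh : ∀ a b, ContDiffOn ℝ 2 (fun w => h w a b) Ω) (hherm : ∀ w ∈ Ω, (h w).IsHermitian)
    (hdet : ∀ w ∈ Ω, IsUnit (h w).det) (hu : ∀ j, DifferentiableOn ℂ (u j) Ω) :
    ddbarT h u z = -nakanoForm h z (fun j => u j z)
      + hnorm (h z) (fun a => ∑ j, covD h j (u j) z a) := by
  rw [ofReal_hnorm _ (hherm z hz), ← Finset.sum_fn, hpair_sum_left]
  simp only [hpair_sum_right, ddbarT, nakanoForm,
    wD_wDbar_hpair_eq hΩ hz hh hherm hdet (hu _) (hu _), Finset.sum_add_distrib,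
    Finset.sum_neg_distrib]

lemma exists_covD_eq_zero (h : (Fin n → ℂ) → Matrix (Fin r) (Fin r) ℂ) (z : Fin n → ℂ)
    (s : Fin n → Fin r → ℂ) :
    ∃ u : Fin n → (Fin n → ℂ) → Fin r → ℂ,
      (∀ j, Differentiable ℂ (u j)) ∧ (∀ j, u j z = s j) ∧ ∀ j, covD h j (u j) z = 0 := by
  refine ⟨fun j w => s j - (w j - z j) • (conn h j z *ᵥ s j), fun j => by fun_prop,
    fun j => by simp, fun j => ?_⟩
  funext a
  set c := (conn h j z *ᵥ s j) a
  have hd : HasFDerivAt (fun w : Fin n → ℂ => s j a - (w j - z j) * c)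
      (-(c • ContinuousLinearMap.proj (R := ℂ) (φ := fun _ : Fin n => ℂ) j)) z :=
    (((hasFDerivAt_apply j z).sub_const (z j)).mul_const c).const_sub (s j a)
  simp [covD, vecWD, hd.differentiableAt.wD_eq, hd.fderiv, c]

end Nakano

/-- For a smooth hermitian metric `h` and an `n`-tuple `u` of holomorphic
sections, with `T_u^h = ∑ (u_j,u_k)_h (dz_j ∧ dz̄_k)^`, one has (in scalar form, i.e. as the
coefficient of `dV`)
`i∂∂̄T_u^h = -∑(Θ_{jk}u_j,u_k)_h + ‖∑ D′_{z_j}u_j‖²_h`,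
and `h` is negatively curved in the sense of Nakano iff `T_u^h` is a plurisubharmonic
`(n-1,n-1)`-form (`i∂∂̄T_u^h ≥ 0`) for every `n`-tuple of local holomorphic sections. -/
theorem statement_13 {n r : ℕ} (Ω : Set (Fin n → ℂ)) (hΩ : IsOpen Ω)
    (h : (Fin n → ℂ) → Matrix (Fin r) (Fin r) ℂ)
    (hsm : ∀ a b, ContDiffOn ℝ (⊤ : ℕ∞) (fun z => h z a b) Ω)
    (hpd : ∀ z ∈ Ω, (h z).PosDef) :
    (∀ u : Fin n → (Fin n → ℂ) → Fin r → ℂ, (∀ j, DifferentiableOn ℂ (u j) Ω) →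
      ∀ z ∈ Ω,
        (∑ j, ∑ k, wD j (fun w => wDbar k (fun v => hpair (h v) (u j v) (u k v)) w) z)
          = - (∑ j, ∑ k, hpair (h z) ((curv h j k z).mulVec (u j z)) (u k z))
            + ((hnorm (h z)
                (fun a => ∑ j, (wD j (fun w => u j w a) z
                  + (conn h j z).mulVec (u j z) a)) : ℝ) : ℂ)) ∧
    ((∀ z ∈ Ω, ∀ s : Fin n → Fin r → ℂ,
        (∑ j, ∑ k, hpair (h z) ((curv h j k z).mulVec (s j)) (s k)).re ≤ 0) ↔
      (∀ U : Set (Fin n → ℂ), IsOpen U → U ⊆ Ω →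
        ∀ u : Fin n → (Fin n → ℂ) → Fin r → ℂ, (∀ j, DifferentiableOn ℂ (u j) U) →
          ∀ z ∈ U,
            0 ≤ (∑ j, ∑ k,
              wD j (fun w => wDbar k (fun v => hpair (h v) (u j v) (u k v)) w) z).re)) := by
  have hsm2 : ∀ a b, ContDiffOn ℝ 2 (fun z => h z a b) Ω := fun a b =>
    (hsm a b).of_le (WithTop.coe_le_coe.mpr le_top)
  have hident : ∀ U ⊆ Ω, IsOpen U → ∀ u : Fin n → (Fin n → ℂ) → Fin r → ℂ,
      (∀ j, DifferentiableOn ℂ (u j) U) → ∀ z ∈ U, ddbarT h u z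
        = -nakanoForm h z (fun j => u j z) + hnorm (h z) (fun a => ∑ j, covD h j (u j) z a) :=
    fun U hUΩ hU u hu z hz => ddbarT_eq hU hz (fun a b => (hsm2 a b).mono hUΩ)
      (fun w hw => (hpd w (hUΩ hw)).isHermitian)
      (fun w hw => (Matrix.isUnit_iff_isUnit_det _).mp (hpd w (hUΩ hw)).isUnit) hu
  refine ⟨hident Ω subset_rfl hΩ, fun hneg U hU hUΩ u hu z hz => ?_, fun hpsh z hz s => ?_⟩
  · change 0 ≤ (ddbarT h u z).re
    rw [hident U hUΩ hU u hu z hz]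
    have hN : (nakanoForm h z fun j => u j z).re ≤ 0 := hneg z (hUΩ hz) _
    have := (hpd z (hUΩ hz)).posSemidef.hnorm_nonneg (fun a => ∑ j, covD h j (u j) z a)
    simp only [add_re, neg_re, ofReal_re]
    linarith
  · obtain ⟨u, hu, huz, hD⟩ := exists_covD_eq_zero h z s
    have hpos := hpsh Ω hΩ subset_rfl u (fun j => (hu j).differentiableOn) z hz
    change 0 ≤ (ddbarT h u z).re at hpos
    have hD0 : (fun a => ∑ j, covD h j (u j) z a) = 0 := funext fun a => by simp [hD]
    rw [hident Ω subset_rfl hΩ u (fun j => (hu j).differentiableOn) z hz, funext huz, hD0,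
      show hnorm (h z) 0 = 0 by simp [hnorm, hpair]] at hpos
    change (nakanoForm h z s).re ≤ 0
    simpa using hpos
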